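/- arXiv:2604.02417 — 5 statements merged into one kernel-verified Lean document; each statement's English description precedes it below -/
import Mathlib

section
/- Let P, Q be orthogonal projections on a finite-dimensional complex Hilbert space H, with Q = Σ_{k=1}^{D_ρ} |w_k⟩⟨w_k| in its Halmos basis with principal angles θ_k relative to P, and let G₂ = (1/D_ρ)Σ_k cos²θ_k and σ² = (1/D_ρ)Σ_k(cos²θ_k − G₂)². Then for every λ ≥ 0 there exists a subspace H_th ⊆ range(Q) of dimension at least D_ρ(1 − σ²/λ²) such that every nonzero ψ ∈ H_th satisfies |⟨ψ, Pψ⟩/⟨ψ,ψ⟩ − G₂| ≤ λ. -/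
open Matrix Complex Finset Real

/-- The outer product `|w⟩⟨w|` as a matrix. -/
noncomputable def outerProd {N : ℕ} (w : Fin N → ℂ) : Matrix (Fin N) (Fin N) ℂ :=
  Matrix.vecMulVec w (star w)


lemma dot_sum {N : ℕ} {ι : Type*} (s : Finset ι) (x : Fin N → ℂ) (f : ι → (Fin N → ℂ)) :
    x ⬝ᵥ (∑ i ∈ s, f i) = ∑ i ∈ s, x ⬝ᵥ f i := by
  simp only [dotProduct, Finset.sum_apply, Finset.mul_sum]
  rw [Finset.sum_comm]

lemma sum_dot {N : ℕ} {ι : Type*} (s : Finset ι) (x : Fin N → ℂ) (f : ι → (Fin N → ℂ)) :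
    (∑ i ∈ s, f i) ⬝ᵥ x = ∑ i ∈ s, f i ⬝ᵥ x := by
  simp only [dotProduct, Finset.sum_apply, Finset.sum_mul]
  rw [Finset.sum_comm]

lemma sum_mulVec' {N : ℕ} {ι : Type*} (s : Finset ι) (M : ι → Matrix (Fin N) (Fin N) ℂ)
    (y : Fin N → ℂ) : (∑ i ∈ s, M i).mulVec y = ∑ i ∈ s, (M i).mulVec y := by
  funext j
  simp only [Matrix.mulVec, dotProduct, Matrix.sum_apply, Finset.sum_apply, Finset.sum_mul]
  rw [Finset.sum_comm]

lemma mulVec_sum' {N : ℕ} {ι : Type*} (s : Finset ι) (M : Matrix (Fin N) (Fin N) ℂ)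
    (f : ι → (Fin N → ℂ)) : M.mulVec (∑ i ∈ s, f i) = ∑ i ∈ s, M.mulVec (f i) := by
  funext j
  simp only [Matrix.mulVec, dotProduct, Finset.sum_apply, Finset.mul_sum]
  rw [Finset.sum_comm]

lemma outerProd_mulVec {N : ℕ} (x y : Fin N → ℂ) :
    (outerProd x).mulVec y = (star x ⬝ᵥ y) • x := by
  funext i
  simp only [outerProd, Matrix.mulVec, Matrix.vecMulVec, dotProduct, Pi.smul_apply,
    smul_eq_mul, Finset.sum_mul, Matrix.of_apply, Pi.star_apply, Finset.mul_sum]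
  exact Finset.sum_congr rfl fun j _ => by ring

lemma star_dot_comm {N : ℕ} (x y : Fin N → ℂ) :
    star (star x ⬝ᵥ y) = star y ⬝ᵥ x := by
  simp only [dotProduct, star_sum, star_mul', star_star, Pi.star_apply]
  exact Finset.sum_congr rfl fun j _ => by ring

/-- Given Halmos' decomposition of projections `P`, `Q` with principal angles
`θ_k`, mean `G₂` and variance `σ²` of `cos²θ_k`, for every `λ ≥ 0` there is a subspace
`H_th ⊆ range Q` of dimension at least `D_ρ(1 − σ²/λ²)` (stated multiplied through by `λ²`)
on whose nonzero vectors the normalized expectation of `P` is within `λ` of `G₂`. -/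
theorem stmt4
    {N DR Dρ : ℕ} (hle : Dρ ≤ DR) (hDρ : 0 < Dρ)
    (P Q : Matrix (Fin N) (Fin N) ℂ)
    (hPh : P.IsHermitian) (hPi : P * P = P)
    (hQh : Q.IsHermitian) (hQi : Q * Q = Q)
    (a : Fin (DR - Dρ) → (Fin N → ℂ)) (u v : Fin Dρ → (Fin N → ℂ))
    (θ : Fin Dρ → ℝ)
    (hθ : ∀ k, θ k ∈ Set.Icc (0 : ℝ) (π / 2))
    (ha : ∀ j m, star (a j) ⬝ᵥ a m = if j = m then 1 else 0)
    (hu : ∀ k l, star (u k) ⬝ᵥ u l = if k = l then 1 else 0)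
    (hv : ∀ k l, star (v k) ⬝ᵥ v l = if k = l then 1 else 0)
    (hau : ∀ j k, star (a j) ⬝ᵥ u k = 0)
    (hav : ∀ j k, star (a j) ⬝ᵥ v k = 0)
    (huv : ∀ k l, star (u k) ⬝ᵥ v l = 0)
    (w : Fin Dρ → (Fin N → ℂ))
    (hw : ∀ k, w k = fun i =>
      (Real.cos (θ k) : ℂ) * u k i + (Real.sin (θ k) : ℂ) * v k i)
    (hP : P = (∑ j, outerProd (a j)) + ∑ k, outerProd (u k))
    (hQ : Q = ∑ k, outerProd (w k))
    (G₂ σsq : ℝ)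
    (hG : G₂ = (1 / (Dρ : ℝ)) * ∑ k, (Real.cos (θ k)) ^ 2)
    (hσ : σsq = (1 / (Dρ : ℝ)) * ∑ k, ((Real.cos (θ k)) ^ 2 - G₂) ^ 2)
    (lam : ℝ) (hlam : 0 ≤ lam) :
    ∃ Hth : Submodule ℂ (Fin N → ℂ),
      Hth ≤ Submodule.span ℂ (Set.range w) ∧
      (Dρ : ℝ) * (lam ^ 2 - σsq) ≤ (Module.finrank ℂ Hth : ℝ) * lam ^ 2 ∧
      ∀ ψ ∈ Hth, ψ ≠ 0 →
        |(star ψ ⬝ᵥ P.mulVec ψ).re / (star ψ ⬝ᵥ ψ).re - G₂| ≤ lam := by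
  classical
  have hw' : ∀ k, w k = (Real.cos (θ k) : ℂ) • u k + (Real.sin (θ k) : ℂ) • v k := by
    intro k; funext i; simp [hw k]
  have hvu : ∀ k l, star (v k) ⬝ᵥ u l = 0 := by
    intro k l
    have h := congrArg star (huv l k)
    rwa [star_dot_comm, star_zero] at h
  have duw : ∀ k l, star (u k) ⬝ᵥ w l = (Real.cos (θ l) : ℂ) * (if k = l then 1 else 0) := by
    intro k l
    rw [hw' l, dotProduct_add, dotProduct_smul, dotProduct_smul, hu, huv]
    simp
  have daw : ∀ j l, star (a j) ⬝ᵥ w l = 0 := by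
    intro j l
    rw [hw' l, dotProduct_add, dotProduct_smul, dotProduct_smul, hau, hav]
    simp
  have dwu : ∀ l k, star (w l) ⬝ᵥ u k = (Real.cos (θ l) : ℂ) * (if k = l then 1 else 0) := by
    intro l k
    have h := congrArg star (duw k l)
    rw [star_dot_comm] at h
    rw [h, star_mul']
    by_cases hkl : k = l
    · rw [if_pos hkl, star_one, mul_one, mul_one, Complex.star_def, Complex.conj_ofReal]
    · rw [if_neg hkl, star_zero, mul_zero, mul_zero]
  have dwv : ∀ l k, star (w l) ⬝ᵥ v k = (Real.sin (θ l) : ℂ) * (if k = l then 1 else 0) := by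
    intro l k
    rw [hw' l]
    have hst : star ((Real.cos (θ l) : ℂ) • u l + (Real.sin (θ l) : ℂ) • v l)
        = (Real.cos (θ l) : ℂ) • star (u l) + (Real.sin (θ l) : ℂ) • star (v l) := by
      rw [star_add, star_smul, star_smul,
        show star ((Real.cos (θ l) : ℝ) : ℂ) = ((Real.cos (θ l) : ℝ) : ℂ) from
          Complex.star_def ▸ Complex.conj_ofReal _,
        show star ((Real.sin (θ l) : ℝ) : ℂ) = ((Real.sin (θ l) : ℝ) : ℂ) from
          Complex.star_def ▸ Complex.conj_ofReal _]
    rw [hst, add_dotProduct, smul_dotProduct, smul_dotProduct, huv, hv]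
    by_cases hkl : k = l
    · subst hkl; simp
    · simp [hkl, Ne.symm hkl]
  have dww : ∀ l k, star (w l) ⬝ᵥ w k = if l = k then 1 else 0 := by
    intro l k
    rw [hw' k, dotProduct_add, dotProduct_smul, dotProduct_smul, dwu, dwv]
    by_cases h : l = k
    · subst h
      simp only [if_pos rfl, smul_eq_mul, mul_one]
      norm_cast
      nlinarith [Real.sin_sq_add_cos_sq (θ l)]
    · simp [if_neg h, if_neg (Ne.symm h)]
  have hPw : ∀ k, P.mulVec (w k) = (Real.cos (θ k) : ℂ) • u k := by
    intro k
    rw [hP, Matrix.add_mulVec, sum_mulVec', sum_mulVec']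
    simp only [outerProd_mulVec, daw, duw, zero_smul, Finset.sum_const_zero, zero_add]
    rw [Finset.sum_eq_single k (fun m _ hmk => by rw [if_neg hmk, mul_zero, zero_smul])
      (fun hk => absurd (Finset.mem_univ k) hk)]
    rw [if_pos rfl, mul_one]
  set S : Finset (Fin Dρ) := Finset.univ.filter (fun k => |(Real.cos (θ k))^2 - G₂| ≤ lam)
    with hS
  have hli : LinearIndependent ℂ (fun k : {x // x ∈ S} => w (k : Fin Dρ)) := by
    rw [linearIndependent_iff']
    intro s g hsum i hi
    have h := congrArg (fun ψ => star (w (i : Fin Dρ)) ⬝ᵥ ψ) hsum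
    simp only [dot_sum, dotProduct_smul, dww, dotProduct_zero, smul_eq_mul,
      mul_ite, mul_one, mul_zero, Subtype.coe_inj] at h
    rwa [Finset.sum_ite_eq, if_pos hi] at h
  refine ⟨Submodule.span ℂ (Set.range (fun k : {x // x ∈ S} => w (k : Fin Dρ))), ?_, ?_, ?_⟩
  · apply Submodule.span_mono
    rintro _ ⟨k, rfl⟩
    exact ⟨k, rfl⟩
  · rw [finrank_span_eq_card hli, Fintype.card_coe]
    have hcard : (S.card : ℝ) + ((Finset.univ.filter
        (fun k => ¬ |(Real.cos (θ k))^2 - G₂| ≤ lam)).card : ℝ) = (Dρ : ℝ) := by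
      rw [← Nat.cast_add]
      norm_cast
      rw [hS]
      simpa using Finset.card_filter_add_card_filter_not
        (s := Finset.univ) (fun k : Fin Dρ => |(Real.cos (θ k))^2 - G₂| ≤ lam)
    set T := Finset.univ.filter (fun k : Fin Dρ => ¬ |(Real.cos (θ k))^2 - G₂| ≤ lam) with hT
    have hsum : (T.card : ℝ) * lam ^ 2 ≤ (Dρ : ℝ) * σsq := by
      have h1 : (T.card : ℝ) * lam ^ 2 = ∑ k ∈ T, lam ^ 2 := by
        rw [Finset.sum_const, nsmul_eq_mul]
      rw [h1]
      have h2 : ∑ k ∈ T, lam ^ 2 ≤ ∑ k ∈ T, ((Real.cos (θ k))^2 - G₂)^2 := by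
        apply Finset.sum_le_sum
        intro k hk
        rw [hT, Finset.mem_filter] at hk
        have h5 := hk.2
        push_neg at h5
        calc lam ^ 2 ≤ |(Real.cos (θ k))^2 - G₂| ^ 2 :=
              pow_le_pow_left₀ hlam (le_of_lt h5) 2
          _ = ((Real.cos (θ k))^2 - G₂)^2 := sq_abs _
      have h3 : ∑ k ∈ T, ((Real.cos (θ k))^2 - G₂)^2
          ≤ ∑ k, ((Real.cos (θ k))^2 - G₂)^2 := by
        apply Finset.sum_le_sum_of_subset_of_nonneg (Finset.subset_univ T)
        intro k _ _; positivity
      have h4 : (Dρ : ℝ) * σsq = ∑ k, ((Real.cos (θ k))^2 - G₂)^2 := by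
        rw [hσ]
        field_simp
      linarith
    nlinarith [sq_nonneg lam]
  · intro ψ hψ hne
    rw [Submodule.mem_span_range_iff_exists_fun] at hψ
    obtain ⟨c, hc⟩ := hψ
    have hstar : star ψ = ∑ k : {x // x ∈ S}, star (c k) • star (w (k : Fin Dρ)) := by
      rw [← hc, star_sum]
      exact Finset.sum_congr rfl fun k _ => by rw [star_smul]
    have hdot : ∀ y : Fin N → ℂ, star ψ ⬝ᵥ y
        = ∑ k : {x // x ∈ S}, star (c k) * (star (w (k : Fin Dρ)) ⬝ᵥ y) := by
      intro y
      rw [hstar, sum_dot]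
      exact Finset.sum_congr rfl fun k _ => by rw [smul_dotProduct]; rfl
    set n : {x // x ∈ S} → ℝ := fun k => Complex.normSq (c k) with hn
    have hconj : ∀ k : {x // x ∈ S}, star (c k) * c k = (Complex.normSq (c k) : ℂ) := by
      intro k; rw [mul_comm]; exact Complex.mul_conj (c k)
    have hdenom : (star ψ ⬝ᵥ ψ).re = ∑ k : {x // x ∈ S}, n k := by
      rw [hdot ψ]
      rw [show ψ = ∑ k : {x // x ∈ S}, c k • w (k : Fin Dρ) from hc.symm]
      have key : ∀ k : {x // x ∈ S}, star (c k) *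
          (star (w (k : Fin Dρ)) ⬝ᵥ ∑ l : {x // x ∈ S}, c l • w (l : Fin Dρ))
          = ((n k : ℝ) : ℂ) := by
        intro k
        rw [dot_sum]
        simp only [dotProduct_smul, dww, smul_eq_mul, mul_ite, mul_one, mul_zero,
          Subtype.coe_inj]
        rw [Finset.sum_ite_eq, if_pos (Finset.mem_univ k), hconj k]
      rw [Finset.sum_congr rfl fun k _ => key k, ← Complex.ofReal_sum, Complex.ofReal_re]
    have hnum : (star ψ ⬝ᵥ P.mulVec ψ).re
        = ∑ k : {x // x ∈ S}, n k * (Real.cos (θ (k : Fin Dρ)))^2 := by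
      have hPψ : P.mulVec ψ = ∑ l : {x // x ∈ S},
          (c l * (Real.cos (θ (l : Fin Dρ)) : ℂ)) • u (l : Fin Dρ) := by
        rw [← hc, mulVec_sum']
        refine Finset.sum_congr rfl fun l _ => ?_
        rw [Matrix.mulVec_smul, hPw, smul_smul]
      rw [hdot, hPψ]
      have key : ∀ k : {x // x ∈ S}, star (c k) *
          (star (w (k : Fin Dρ)) ⬝ᵥ ∑ l : {x // x ∈ S},
            (c l * (Real.cos (θ (l : Fin Dρ)) : ℂ)) • u (l : Fin Dρ))
          = ((n k * (Real.cos (θ (k : Fin Dρ)))^2 : ℝ) : ℂ) := by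
        intro k
        rw [dot_sum]
        simp only [dotProduct_smul, dwu, smul_eq_mul, mul_ite, mul_one, mul_zero,
          Subtype.coe_inj]
        rw [Finset.sum_ite_eq', if_pos (Finset.mem_univ k)]
        rw [show star (c k) * (c k * (Real.cos (θ (k : Fin Dρ)) : ℂ)
              * (Real.cos (θ (k : Fin Dρ)) : ℂ))
            = (star (c k) * c k) * ((Real.cos (θ (k : Fin Dρ)) : ℂ)
              * (Real.cos (θ (k : Fin Dρ)) : ℂ)) by ring]
        rw [hconj k]
        push_cast
        ring
      rw [Finset.sum_congr rfl fun k _ => key k, ← Complex.ofReal_sum, Complex.ofReal_re]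
    have hTpos : 0 < ∑ k : {x // x ∈ S}, n k := by
      rcases (Finset.sum_nonneg fun k _ => Complex.normSq_nonneg (c k)).lt_or_eq with h | h
      · exact h
      · exfalso
        apply hne
        rw [← hc]
        refine Finset.sum_eq_zero fun k _ => ?_
        have hz := (Finset.sum_eq_zero_iff_of_nonneg
          (fun k _ => Complex.normSq_nonneg (c k))).mp h.symm k (Finset.mem_univ k)
        rw [show c k = 0 from Complex.normSq_eq_zero.mp hz, zero_smul]
    rw [hnum, hdenom]
    set Tot := ∑ k : {x // x ∈ S}, n k with hTot
    have key : |∑ k : {x // x ∈ S}, n k * (Real.cos (θ (k : Fin Dρ)))^2 - G₂ * Tot|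
        ≤ lam * Tot := by
      have h1 : ∑ k : {x // x ∈ S}, n k * (Real.cos (θ (k : Fin Dρ)))^2 - G₂ * Tot
          = ∑ k : {x // x ∈ S}, n k * ((Real.cos (θ (k : Fin Dρ)))^2 - G₂) := by
        rw [hTot, Finset.mul_sum, ← Finset.sum_sub_distrib]
        exact Finset.sum_congr rfl fun k _ => by ring
      rw [h1]
      calc |∑ k : {x // x ∈ S}, n k * ((Real.cos (θ (k : Fin Dρ)))^2 - G₂)|
          ≤ ∑ k : {x // x ∈ S}, |n k * ((Real.cos (θ (k : Fin Dρ)))^2 - G₂)| :=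
            Finset.abs_sum_le_sum_abs _ _
        _ ≤ ∑ k : {x // x ∈ S}, n k * lam := by
            apply Finset.sum_le_sum
            intro k _
            rw [abs_mul, _root_.abs_of_nonneg (Complex.normSq_nonneg (c k))]
            apply mul_le_mul_of_nonneg_left _ (Complex.normSq_nonneg (c k))
            exact (Finset.mem_filter.mp k.2).2
        _ = lam * Tot := by rw [← Finset.sum_mul, hTot]; ring
    have hnd : (∑ k : {x // x ∈ S}, n k * (Real.cos (θ (k : Fin Dρ)))^2) / Tot - G₂
        = ((∑ k : {x // x ∈ S}, n k * (Real.cos (θ (k : Fin Dρ)))^2) - G₂ * Tot) / Tot := by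
      field_simp
    rw [hnd, abs_div, _root_.abs_of_pos hTpos, div_le_iff₀ hTpos]
    exact key
end

section
/- With the setup of Halmos' decomposition for projections P, Q (Tr Q = D_ρ, principal angles θ_k, mean G₂, variance σ²), for every orthonormal basis {b_1,…,b_{D_ρ}} of range(Q) and every λ > 0, the fraction f_λ = (1/D_ρ)·#{k : |⟨b_k, P b_k⟩ − G₂| > λ} satisfies f_λ ≤ (3/λ)·(σ²/4)^{1/3}. -/
open Matrix Complex Finset Real
open scoped Classical

/-!
Write `b_k = ∑_l C_{lk} w_l` with `w_l = cos θ_l u_l + sin θ_l v_l`. Both families are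
orthonormal, so `C` is unitary and `p_{kl} = |C_{lk}|²` is doubly stochastic; since `P` compresses
to `diag (cos² θ_l)` on the `w_l`, we get `⟨b_k, P b_k⟩ = ∑_l p_{kl} cos² θ_l`. Doubly stochastic
averaging does not increase the total absolute deviation from `G₂`, so the mean deviation of the
`b_k` is at most that of the `cos² θ_l`, which is at most `σ` by Cauchy–Schwarz. As `σ ≤ 1`, also
`σ ≤ 3 (σ²/4)^{1/3}`, and Markov's inequality gives the bound.
-/

-- `(of x)ᵀ` is the matrix whose columns are the vectors `x k`.
section Columns

variable {α m n κ : Type*} [CommSemiring α] [StarRing α] [Fintype m]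

lemma conjTranspose_transpose_of_mul_transpose_of (x : n → m → α) (y : κ → m → α) :
    ((of x)ᵀ)ᴴ * (of y)ᵀ = of fun k l => star (x k) ⬝ᵥ y l := by
  ext k l
  simp [mul_apply, dotProduct]

lemma conjTranspose_transpose_of_mul_mul_transpose_of_apply (x : n → m → α) (y : κ → m → α)
    (M : Matrix m m α) (k : n) (l : κ) :
    (((of x)ᵀ)ᴴ * M * (of y)ᵀ) k l = star (x k) ⬝ᵥ M *ᵥ y l := by
  simp only [mul_apply, conjTranspose_apply, transpose_apply, of_apply, dotProduct, mulVec,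
    Pi.star_apply, sum_mul, mul_sum, mul_assoc]
  exact sum_comm

lemma conjTranspose_transpose_of_mul_self_eq_one [DecidableEq n] {x : n → m → α}
    (hx : ∀ k l, star (x k) ⬝ᵥ x l = if k = l then 1 else 0) : ((of x)ᵀ)ᴴ * (of x)ᵀ = 1 := by
  rw [conjTranspose_transpose_of_mul_transpose_of]
  ext k l
  simp [hx, one_apply]

lemma conjTranspose_transpose_of_mul_transpose_of_eq_zero {x : n → m → α} {y : κ → m → α}
    (hxy : ∀ k l, star (x k) ⬝ᵥ y l = 0) : ((of x)ᵀ)ᴴ * (of y)ᵀ = 0 := by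
  rw [conjTranspose_transpose_of_mul_transpose_of]
  ext k l
  simp [hxy]

lemma conjTranspose_mul_eq_zero_symm {A : Matrix m n α} {B : Matrix m κ α} (h : Aᴴ * B = 0) :
    Bᴴ * A = 0 := by
  simpa [conjTranspose_mul] using congrArg conjTranspose h

end Columns

lemma exists_transpose_of_eq_mul_of_forall_mem_span {α m n κ : Type*} [CommSemiring α]
    [Fintype n] {x : κ → m → α} {y : n → m → α} (h : ∀ k, x k ∈ Submodule.span α (Set.range y)) :
    ∃ C : Matrix n κ α, (of x)ᵀ = (of y)ᵀ * C := by
  choose c hc using fun k => (Submodule.mem_span_range_iff_exists_fun α).mp (h k)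
  refine ⟨(of c)ᵀ, ?_⟩
  ext i k
  simp only [transpose_apply, of_apply, ← hc k]
  simp [mul_apply, Finset.sum_apply, mul_comm]

lemma sum_outerProd {N : ℕ} {κ : Type*} [Fintype κ] (a : κ → Fin N → ℂ) :
    ∑ j, outerProd (a j) = (of a)ᵀ * ((of a)ᵀ)ᴴ := by
  ext i i'
  simp [outerProd, vecMulVec_apply, mul_apply, Matrix.sum_apply]

lemma mem_unitaryGroup_of_isometry_mul {α m n : Type*} [CommRing α] [StarRing α] [Fintype m]
    [Fintype n] [DecidableEq n] {W : Matrix m n α} {C : Matrix n n α}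
    (hW : Wᴴ * W = 1) (hWC : (W * C)ᴴ * (W * C) = 1) : C ∈ unitaryGroup n α := by
  rw [mem_unitaryGroup_iff', star_eq_conjTranspose]
  simpa [conjTranspose_mul, Matrix.mul_assoc, ← Matrix.mul_assoc Wᴴ, hW] using hWC

section Rotation

variable {m n p : Type*} [Fintype m] [Fintype n] [DecidableEq n]

noncomputable def rotateTowards (U V : Matrix m n ℂ) (θ : n → ℝ) : Matrix m n ℂ :=
  U * diagonal (fun k => (Real.cos (θ k) : ℂ)) + V * diagonal (fun k => (Real.sin (θ k) : ℂ))

variable {U V : Matrix m n ℂ} (θ : n → ℝ)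

lemma conjTranspose_rotateTowards_mul_self (hUU : Uᴴ * U = 1) (hVV : Vᴴ * V = 1)
    (hUV : Uᴴ * V = 0) : (rotateTowards U V θ)ᴴ * rotateTowards U V θ = 1 := by
  simp only [rotateTowards, conjTranspose_add, conjTranspose_mul, diagonal_conjTranspose,
    Matrix.add_mul, Matrix.mul_add, Matrix.mul_assoc, ← Matrix.mul_assoc Uᴴ,
    ← Matrix.mul_assoc Vᴴ, hUU, hVV, hUV, conjTranspose_mul_eq_zero_symm hUV, Matrix.zero_mul,
    Matrix.mul_zero, Matrix.one_mul, diagonal_mul_diagonal, diagonal_add, add_zero, zero_add]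
  rw [← diagonal_one]
  congr 1
  ext k
  simp only [Pi.star_apply, RCLike.star_def, conj_ofReal]
  norm_cast
  rw [← sq, ← sq, Real.cos_sq_add_sin_sq]

lemma conjTranspose_rotateTowards_mul_mul_self [Fintype p] (A : Matrix m p ℂ)
    (hUU : Uᴴ * U = 1) (hUV : Uᴴ * V = 0) (hAU : Aᴴ * U = 0) (hAV : Aᴴ * V = 0) :
    (rotateTowards U V θ)ᴴ * (A * Aᴴ + U * Uᴴ) * rotateTowards U V θ =
      diagonal fun k => ((Real.cos (θ k) ^ 2 : ℝ) : ℂ) := by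
  set W := rotateTowards U V θ
  have hWA : Wᴴ * A = 0 := by
    simp only [W, rotateTowards, conjTranspose_add, conjTranspose_mul, Matrix.add_mul,
      Matrix.mul_assoc, conjTranspose_mul_eq_zero_symm hAU, conjTranspose_mul_eq_zero_symm hAV,
      Matrix.mul_zero, add_zero]
  have hWU : Wᴴ * U = diagonal (fun k => (Real.cos (θ k) : ℂ)) := by
    simp only [W, rotateTowards, conjTranspose_add, conjTranspose_mul, Matrix.add_mul,
      Matrix.mul_assoc, hUU, conjTranspose_mul_eq_zero_symm hUV, Matrix.mul_zero, add_zero,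
      Matrix.mul_one, diagonal_conjTranspose]
    congr 1
    ext k
    simp [RCLike.star_def, -ofReal_cos]
  calc Wᴴ * (A * Aᴴ + U * Uᴴ) * W = (Wᴴ * A) * (Wᴴ * A)ᴴ + (Wᴴ * U) * (Wᴴ * U)ᴴ := by
        simp only [Matrix.mul_add, Matrix.add_mul, Matrix.mul_assoc, conjTranspose_mul,
          conjTranspose_conjTranspose]
    _ = _ := by
        rw [hWA, hWU, diagonal_conjTranspose, diagonal_mul_diagonal]
        simp [sq, -ofReal_cos, RCLike.star_def]

end Rotation

section DoublyStochastic

variable {n : Type*} [Fintype n] [DecidableEq n]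

lemma map_normSq_mem_doublyStochastic {C : Matrix n n ℂ} (hC : C ∈ unitaryGroup n ℂ) :
    C.map normSq ∈ doublyStochastic ℝ n := by
  refine mem_doublyStochastic_iff_sum.mpr ⟨fun i j => normSq_nonneg _, fun i => ?_, fun j => ?_⟩
  · have h := congr_fun₂ (mem_unitaryGroup_iff.mp hC) i i
    simp only [mul_apply, star_apply, RCLike.star_def, mul_conj, one_apply_eq] at h
    exact_mod_cast h
  · have h := congr_fun₂ (mem_unitaryGroup_iff'.mp hC) j j
    simp only [mul_apply, star_apply, RCLike.star_def, mul_comm _ (C _ j), mul_conj,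
      one_apply_eq] at h
    exact_mod_cast h

lemma conjTranspose_mul_diagonal_mul_apply_self (C : Matrix n n ℂ) (x : n → ℝ) (k : n) :
    (Cᴴ * diagonal (fun l => (x l : ℂ)) * C) k k = (((C.map normSq)ᵀ *ᵥ x) k : ℝ) := by
  rw [mul_apply]
  simp only [mul_diagonal, conjTranspose_apply, mulVec, dotProduct, transpose_apply,
    map_apply, ofReal_sum, ofReal_mul]
  refine sum_congr rfl fun l _ => ?_
  rw [← mul_conj]
  simp [RCLike.star_def]
  ring

lemma sum_abs_mulVec_sub_le {M : Matrix n n ℝ} (hM : M ∈ doublyStochastic ℝ n) (x : n → ℝ)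
    (c : ℝ) : ∑ k, |(M *ᵥ x) k - c| ≤ ∑ l, |x l - c| := by
  have hcenter : ∀ k, (M *ᵥ x) k - c = ∑ l, M k l * (x l - c) := by
    intro k
    simp only [mul_sub, sum_sub_distrib, ← sum_mul, sum_row_of_mem_doublyStochastic hM, one_mul,
      mulVec, dotProduct]
  calc ∑ k, |(M *ᵥ x) k - c| ≤ ∑ k, ∑ l, M k l * |x l - c| := by
        gcongr with k
        rw [hcenter]
        refine (abs_sum_le_sum_abs _ _).trans_eq (sum_congr rfl fun l _ => ?_)
        rw [abs_mul, abs_of_nonneg (hM.1 k l)]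
    _ = ∑ l, |x l - c| := by
        rw [sum_comm]
        simp [← sum_mul, sum_col_of_mem_doublyStochastic hM]

end DoublyStochastic

lemma le_three_mul_rpow_of_sq_le {A s : ℝ} (hA₀ : 0 ≤ A) (hA₁ : A ≤ 1) (hs : A ^ 2 ≤ s) :
    A ≤ 3 * (s / 4) ^ ((1 : ℝ) / 3) := by
  have hs₀ : 0 ≤ s / 4 := by nlinarith
  have ht₀ : 0 ≤ (s / 4) ^ ((1 : ℝ) / 3) := rpow_nonneg hs₀ _
  have ht : ((s / 4) ^ ((1 : ℝ) / 3)) ^ 3 = s / 4 := by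
    rw [one_div]
    exact_mod_cast rpow_inv_natCast_pow (n := 3) hs₀ (by norm_num)
  by_contra! hA
  have hcube : (3 * (s / 4) ^ ((1 : ℝ) / 3)) ^ 3 < A ^ 3 := by gcongr
  nlinarith [pow_le_pow_of_le_one hA₀ hA₁ (show 2 ≤ 3 by norm_num)]

lemma card_filter_lt_abs_mul_le_sum {ι : Type*} [Fintype ι] (d : ι → ℝ) (lam : ℝ) :
    (#{k | lam < |d k|} : ℝ) * lam ≤ ∑ k, |d k| := by
  rw [← nsmul_eq_mul]
  calc #{k | lam < |d k|} • lam ≤ ∑ k ∈ {k | lam < |d k|}, |d k| :=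
        card_nsmul_le_sum _ _ _ fun k hk => (mem_filter.mp hk).2.le
    _ ≤ ∑ k, |d k| := sum_le_sum_of_subset_of_nonneg (subset_univ _) fun k _ _ => abs_nonneg _

lemma card_filter_lt_abs_mulVec_sub_div_card_le {ι : Type*} [Fintype ι] [DecidableEq ι]
    {M : Matrix ι ι ℝ} (hM : M ∈ doublyStochastic ℝ ι) {x : ι → ℝ} (hx : ∀ l, x l ∈ Set.Icc 0 1)
    {G σsq : ℝ} (hG : G = (1 / (Fintype.card ι : ℝ)) * ∑ l, x l)
    (hσ : σsq = (1 / (Fintype.card ι : ℝ)) * ∑ l, (x l - G) ^ 2) {lam : ℝ} (hlam : 0 < lam) :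
    (#{k | lam < |(M *ᵥ x) k - G|} : ℝ) / (Fintype.card ι : ℝ)
      ≤ (3 / lam) * (σsq / 4) ^ ((1 : ℝ) / 3) := by
  set n : ℝ := ((Fintype.card ι : ℕ) : ℝ)
  have hG₀ : 0 ≤ G := hG ▸ mul_nonneg (by positivity) (sum_nonneg fun l _ => (hx l).1)
  have hG₁ : G ≤ 1 := by
    rw [hG, one_div_mul_eq_div]
    refine div_le_one_of_le₀ ((sum_le_sum fun l _ => (hx l).2).trans_eq ?_) (Nat.cast_nonneg _)
    simp [n]
  have hdev : ∀ l, |x l - G| ≤ 1 := fun l => abs_sub_le_iff.mpr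
    ⟨by linarith [(hx l).2], by linarith [(hx l).1]⟩
  set A := (∑ l, |x l - G|) / n
  have hA₁ : A ≤ 1 := div_le_one_of_le₀ ((sum_le_sum fun l _ => hdev l).trans_eq (by simp [n]))
    (Nat.cast_nonneg _)
  have hA : A ^ 2 ≤ σsq := by
    rw [hσ, one_div_mul_eq_div]
    have h := sum_div_card_sq_le_sum_sq_div_card (s := univ) (f := fun l => |x l - G|)
    simp only [card_univ, sq_abs] at h
    exact h
  calc (#{k | lam < |(M *ᵥ x) k - G|} : ℝ) / n
      = (#{k | lam < |(M *ᵥ x) k - G|} * lam / n) / lam := by field_simp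
    _ ≤ A / lam := by
        gcongr
        exact div_le_div_of_nonneg_right
          ((card_filter_lt_abs_mul_le_sum _ _).trans (sum_abs_mulVec_sub_le hM x G))
          (Nat.cast_nonneg _)
    _ ≤ 3 * (σsq / 4) ^ ((1 : ℝ) / 3) / lam := by
        gcongr
        exact le_three_mul_rpow_of_sq_le (by positivity) hA₁ hA
    _ = (3 / lam) * (σsq / 4) ^ ((1 : ℝ) / 3) := by ring

theorem stmt5_general
    {N DR Dρ : ℕ}
    (P : Matrix (Fin N) (Fin N) ℂ)
    (a : Fin (DR - Dρ) → (Fin N → ℂ)) (u v : Fin Dρ → (Fin N → ℂ))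
    (θ : Fin Dρ → ℝ)
    (hu : ∀ k l, star (u k) ⬝ᵥ u l = if k = l then 1 else 0)
    (hv : ∀ k l, star (v k) ⬝ᵥ v l = if k = l then 1 else 0)
    (hau : ∀ j k, star (a j) ⬝ᵥ u k = 0)
    (hav : ∀ j k, star (a j) ⬝ᵥ v k = 0)
    (huv : ∀ k l, star (u k) ⬝ᵥ v l = 0)
    (w : Fin Dρ → (Fin N → ℂ))
    (hw : ∀ k, w k = fun i =>
      (Real.cos (θ k) : ℂ) * u k i + (Real.sin (θ k) : ℂ) * v k i)
    (hP : P = (∑ j, outerProd (a j)) + ∑ k, outerProd (u k))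
    (G₂ σsq : ℝ)
    (hG : G₂ = (1 / (Dρ : ℝ)) * ∑ k, (Real.cos (θ k)) ^ 2)
    (hσ : σsq = (1 / (Dρ : ℝ)) * ∑ k, ((Real.cos (θ k)) ^ 2 - G₂) ^ 2)
    (b : Fin Dρ → (Fin N → ℂ))
    (hb : ∀ k l, star (b k) ⬝ᵥ b l = if k = l then 1 else 0)
    (hbmem : ∀ k, b k ∈ Submodule.span ℂ (Set.range w))
    (lam : ℝ) (hlam : 0 < lam) :
    ((Finset.univ.filter
        (fun k => lam < |(star (b k) ⬝ᵥ P.mulVec (b k)).re - G₂|)).card : ℝ) / Dρ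
      ≤ (3 / lam) * (σsq / 4) ^ ((1 : ℝ) / 3) := by
  set U := (of u)ᵀ
  set V := (of v)ᵀ
  have hUU : Uᴴ * U = 1 := conjTranspose_transpose_of_mul_self_eq_one hu
  have hUV : Uᴴ * V = 0 := conjTranspose_transpose_of_mul_transpose_of_eq_zero huv
  have hW : (of w)ᵀ = rotateTowards U V θ := by
    ext i k
    simp [rotateTowards, hw, U, V, mul_comm]
  have hWW : ((of w)ᵀ)ᴴ * (of w)ᵀ = 1 := hW ▸ conjTranspose_rotateTowards_mul_self θ hUU
    (conjTranspose_transpose_of_mul_self_eq_one hv) hUV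
  have hWPW : ((of w)ᵀ)ᴴ * P * (of w)ᵀ = diagonal fun k => ((Real.cos (θ k) ^ 2 : ℝ) : ℂ) := by
    rw [hP, sum_outerProd, sum_outerProd, hW]
    exact conjTranspose_rotateTowards_mul_mul_self θ _ hUU hUV
      (conjTranspose_transpose_of_mul_transpose_of_eq_zero hau)
      (conjTranspose_transpose_of_mul_transpose_of_eq_zero hav)
  obtain ⟨C, hBC⟩ := exists_transpose_of_eq_mul_of_forall_mem_span hbmem
  have hC : C ∈ unitaryGroup (Fin Dρ) ℂ :=
    mem_unitaryGroup_of_isometry_mul hWW (hBC ▸ conjTranspose_transpose_of_mul_self_eq_one hb)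
  have hBPB : ((of b)ᵀ)ᴴ * P * (of b)ᵀ =
      Cᴴ * (diagonal fun k => ((Real.cos (θ k) ^ 2 : ℝ) : ℂ)) * C := by
    rw [hBC, conjTranspose_mul, ← hWPW]
    simp only [Matrix.mul_assoc]
  have hdiag : ∀ k, (star (b k) ⬝ᵥ P *ᵥ b k).re =
      ((C.map normSq)ᵀ *ᵥ fun l => Real.cos (θ l) ^ 2) k := fun k => by
    rw [← conjTranspose_transpose_of_mul_mul_transpose_of_apply, hBPB,
      conjTranspose_mul_diagonal_mul_apply_self, ofReal_re]
  simp_rw [hdiag]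
  rw [show (Dρ : ℝ) = Fintype.card (Fin Dρ) by simp] at hG hσ ⊢
  exact card_filter_lt_abs_mulVec_sub_div_card_le
    (transpose_mem_doublyStochastic_iff.mpr (map_normSq_mem_doublyStochastic hC))
    (fun l => ⟨sq_nonneg _, cos_sq_le_one _⟩) hG hσ hlam

/-- In the Halmos setup for projections `P`, `Q` (principal angles `θ_k`, mean
`G₂`, variance `σ²` of `cos²θ_k`), for every orthonormal basis `{b_k}` of `range Q` and every
`λ > 0`, the fraction `f_λ` of basis states with `|⟨b_k, P b_k⟩ − G₂| > λ` satisfies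
`f_λ ≤ (3/λ)·(σ²/4)^{1/3}`. -/
theorem stmt5
    {N DR Dρ : ℕ} (hle : Dρ ≤ DR) (hDρ : 0 < Dρ)
    (P Q : Matrix (Fin N) (Fin N) ℂ)
    (hPh : P.IsHermitian) (hPi : P * P = P)
    (hQh : Q.IsHermitian) (hQi : Q * Q = Q)
    (a : Fin (DR - Dρ) → (Fin N → ℂ)) (u v : Fin Dρ → (Fin N → ℂ))
    (θ : Fin Dρ → ℝ)
    (hθ : ∀ k, θ k ∈ Set.Icc (0 : ℝ) (π / 2))
    (ha : ∀ j m, star (a j) ⬝ᵥ a m = if j = m then 1 else 0)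
    (hu : ∀ k l, star (u k) ⬝ᵥ u l = if k = l then 1 else 0)
    (hv : ∀ k l, star (v k) ⬝ᵥ v l = if k = l then 1 else 0)
    (hau : ∀ j k, star (a j) ⬝ᵥ u k = 0)
    (hav : ∀ j k, star (a j) ⬝ᵥ v k = 0)
    (huv : ∀ k l, star (u k) ⬝ᵥ v l = 0)
    (w : Fin Dρ → (Fin N → ℂ))
    (hw : ∀ k, w k = fun i =>
      (Real.cos (θ k) : ℂ) * u k i + (Real.sin (θ k) : ℂ) * v k i)
    (hP : P = (∑ j, outerProd (a j)) + ∑ k, outerProd (u k))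
    (hQ : Q = ∑ k, outerProd (w k))
    (G₂ σsq : ℝ)
    (hG : G₂ = (1 / (Dρ : ℝ)) * ∑ k, (Real.cos (θ k)) ^ 2)
    (hσ : σsq = (1 / (Dρ : ℝ)) * ∑ k, ((Real.cos (θ k)) ^ 2 - G₂) ^ 2)
    (b : Fin Dρ → (Fin N → ℂ))
    (hb : ∀ k l, star (b k) ⬝ᵥ b l = if k = l then 1 else 0)
    (hbmem : ∀ k, b k ∈ Submodule.span ℂ (Set.range w))
    (hbspan : Submodule.span ℂ (Set.range b) = Submodule.span ℂ (Set.range w))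
    (lam : ℝ) (hlam : 0 < lam) :
    ((Finset.univ.filter
        (fun k => lam < |(star (b k) ⬝ᵥ P.mulVec (b k)).re - G₂|)).card : ℝ) / Dρ
      ≤ (3 / lam) * (σsq / 4) ^ ((1 : ℝ) / 3) :=
  stmt5_general P a u v θ hu hv hau hav huv w hw hP G₂ σsq hG hσ b hb hbmem lam hlam
end

section
/- Converse bound: let P, Q be orthogonal projections with Tr Q = D_ρ, G₂ = (1/D_ρ)Tr[PQ], σ² = (1/D_ρ)Tr[PQPQ] − G₂², and let 0 ≤ λ < 1. If for EVERY orthonormal basis {b_k} of range(Q) the fraction of indices with |⟨b_k, P b_k⟩ − G₂| > λ is at most f^max, then σ² ≤ λ² + (1 − λ²)·f^max. -/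
/-!
Diagonalise the compression `QPQ` on `range Q`. Since `Q = ∑ₖ bₖ bₖ*` for any orthonormal basis
`(bₖ)` of `range Q`, an eigenbasis with `QPQ bₖ = νₖ bₖ` gives `⟨bₖ, P bₖ⟩ = νₖ ∈ [0, 1]`,
`Tr[PQ] = ∑ νₖ` and `Tr[PQPQ] = ∑ νₖ²`. So `σ²` is the variance of the `νₖ` about their mean
`G₂`: a squared deviation is at most `λ²`, except at the indices where the deviation exceeds
`λ`, at most a fraction `f^max` of them, where it is at most `1`.
-/

open Matrix Complex Finset
open scoped Classical ComplexOrder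

theorem Finset.sum_sq_sub_le_of_abs_sub_le_one {ι : Type*} (s : Finset ι) (x : ι → ℝ)
    {c lam : ℝ} (hx : ∀ i ∈ s, |x i - c| ≤ 1) (hlam : 0 ≤ lam) :
    ∑ i ∈ s, (x i - c) ^ 2 ≤ lam ^ 2 * #s + (1 - lam ^ 2) * #{i ∈ s | lam < |x i - c|} := by
  rw [natCast_card_filter, Finset.mul_sum, Finset.card_eq_sum_ones, Nat.cast_sum,
    Finset.mul_sum, ← Finset.sum_add_distrib]
  refine Finset.sum_le_sum fun i hi => ?_
  rw [← sq_abs, Nat.cast_one, mul_one]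
  split_ifs with h
  · nlinarith [hx i hi, abs_nonneg (x i - c)]
  · nlinarith [abs_nonneg (x i - c), not_lt.1 h]

theorem mean_sq_sub_sq_mean_le {ι : Type*} [Fintype ι] (x : ι → ℝ)
    (hx : ∀ i, x i ∈ Set.Icc (0 : ℝ) 1) {lam : ℝ} (hlam : 0 ≤ lam) :
    (∑ i, x i ^ 2) / Fintype.card ι - ((∑ i, x i) / Fintype.card ι) ^ 2 ≤
      lam ^ 2 + (1 - lam ^ 2) *
        (#{i | lam < |x i - (∑ j, x j) / Fintype.card ι|} / Fintype.card ι) := by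
  set D : ℝ := (Fintype.card ι : ℝ) with hD_def
  set m := (∑ i, x i) / D
  rcases isEmpty_or_nonempty ι with hι | hι
  · simpa [D, m] using sq_nonneg lam
  have hD : 0 < D := by simp [D, Fintype.card_pos]
  have hm : m ∈ Set.Icc (0 : ℝ) 1 := by
    constructor
    · exact div_nonneg (sum_nonneg fun i _ => (hx i).1) hD.le
    · rw [div_le_one hD]
      simpa [D] using sum_le_sum fun i (_ : i ∈ univ) => (hx i).2
  have hvar : (∑ i, x i ^ 2) / D - m ^ 2 = (∑ i, (x i - m) ^ 2) / D := by
    have hsum : ∑ i, x i = m * D := (div_mul_cancel₀ _ hD.ne').symm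
    simp only [sub_sq, sum_add_distrib, sum_sub_distrib, ← sum_mul, ← mul_sum, hsum, sum_const,
      card_univ, nsmul_eq_mul, ← hD_def]
    field_simp
    ring
  have hdev := Finset.sum_sq_sub_le_of_abs_sub_le_one univ x (c := m)
    (fun i _ => abs_le.2 ⟨by linarith [(hx i).1, hm.2], by linarith [(hx i).2, hm.1]⟩) hlam
  rw [hvar, div_le_iff₀ hD]
  calc _ ≤ _ := hdev
    _ = _ := by rw [card_univ, ← hD_def]; field_simp

theorem Matrix.mulVec_eq_self_of_mem_range {n R : Type*} [Fintype n] [CommSemiring R]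
    {Q : Matrix n n R} (hQ : IsIdempotentElem Q) {v : n → R}
    (hv : v ∈ LinearMap.range Q.mulVecLin) : Q *ᵥ v = v := by
  obtain ⟨u, rfl⟩ := hv
  rw [mulVecLin_apply, mulVec_mulVec, hQ.eq]

section OrthonormalBasis

variable {𝕜 : Type*} [RCLike 𝕜] {n ι : Type*} [Fintype n]

open scoped MatrixOrder in
theorem IsStarProjection.re_dotProduct_mulVec_mem_Icc [DecidableEq n] {P : Matrix n n 𝕜}
    (hP : IsStarProjection P) (v : n → 𝕜) :
    RCLike.re (star v ⬝ᵥ (P *ᵥ v)) ∈ Set.Icc 0 (RCLike.re (star v ⬝ᵥ v)) := by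
  refine ⟨(nonneg_iff_posSemidef.mp hP.nonneg).re_dotProduct_nonneg v, ?_⟩
  have := (nonneg_iff_posSemidef.mp hP.one_sub_nonneg).re_dotProduct_nonneg v
  rwa [sub_mulVec, one_mulVec, dotProduct_sub, map_sub, sub_nonneg] at this

structure IsOrthonormalBasisOf [DecidableEq ι] (W : Submodule 𝕜 (n → 𝕜)) (b : ι → n → 𝕜) :
    Prop where
  orthonormal : ∀ k l, star (b k) ⬝ᵥ b l = if k = l then 1 else 0
  span_eq : Submodule.span 𝕜 (Set.range b) = W

namespace IsOrthonormalBasisOf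

variable [DecidableEq ι] {b : ι → n → 𝕜}

theorem mem {W : Submodule 𝕜 (n → 𝕜)} (hb : IsOrthonormalBasisOf W b) (k : ι) : b k ∈ W :=
  hb.span_eq ▸ Submodule.subset_span ⟨k, rfl⟩

variable [Fintype ι] {Q : Matrix n n 𝕜}

theorem sum_vecMulVec_eq (hQ : IsStarProjection Q)
    (hb : IsOrthonormalBasisOf (LinearMap.range Q.mulVecLin) b) :
    ∑ k, vecMulVec (b k) (star (b k)) = Q := by
  set R := ∑ k, vecMulVec (b k) (star (b k))
  have hRb : Set.EqOn R.mulVecLin (LinearMap.id : (n → 𝕜) →ₗ[𝕜] _) (Set.range b) := by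
    rintro _ ⟨l, rfl⟩
    simp [R, vecMulVec_mulVec, hb.orthonormal]
  have hRQ : R * Q = Q := ext_iff_mulVec.2 fun v => by
    rw [← mulVec_mulVec]
    exact LinearMap.eqOn_span' hRb (hb.span_eq ▸ LinearMap.mem_range_self _ v)
  have hQR : Q * R = R := by
    simp only [R, Finset.mul_sum, mul_vecMulVec,
      mulVec_eq_self_of_mem_range hQ.isIdempotentElem (hb.mem _)]
  have hR : Rᴴ = R := by simp [R, conjTranspose_sum]
  have hQh : Qᴴ = Q := hQ.isSelfAdjoint
  calc R = Q * R := hQR.symm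
    _ = (R * Q)ᴴ := by rw [conjTranspose_mul, hR, hQh]
    _ = Q := by rw [hRQ, hQh]

theorem trace_mul_eq_sum (hQ : IsStarProjection Q)
    (hb : IsOrthonormalBasisOf (LinearMap.range Q.mulVecLin) b) (A : Matrix n n 𝕜) :
    trace (A * Q) = ∑ k, star (b k) ⬝ᵥ (A *ᵥ b k) := by
  simp [← hb.sum_vecMulVec_eq hQ, Finset.mul_sum, trace_sum, mul_vecMulVec, dotProduct_comm]

theorem card_eq_trace [DecidableEq n] (hQ : IsStarProjection Q)
    (hb : IsOrthonormalBasisOf (LinearMap.range Q.mulVecLin) b) :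
    (Fintype.card ι : 𝕜) = trace Q := by
  rw [← one_mul Q, hb.trace_mul_eq_sum hQ]
  simp [hb.orthonormal]

end IsOrthonormalBasisOf

theorem exists_isOrthonormalBasisOf_mulVec_eq_smul [DecidableEq n] {A : Matrix n n 𝕜}
    (hA : A.IsHermitian) {W : Submodule 𝕜 (n → 𝕜)} (hW : ∀ v ∈ W, A *ᵥ v ∈ W) :
    ∃ (d : ℕ) (b : Fin d → n → 𝕜) (μ : Fin d → ℝ),
      IsOrthonormalBasisOf W b ∧ ∀ k, A *ᵥ b k = (μ k : 𝕜) • b k := by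
  -- the eigenbasis of the self-adjoint restriction of `A` to `W`, read in `EuclideanSpace`
  let L := WithLp.linearEquiv 2 𝕜 (n → 𝕜)
  let V := W.comap L.toLinearMap
  have hV : ∀ v ∈ V, toEuclideanLin A v ∈ V := fun v hv => hW _ hv
  have hS := (isSymmetric_toEuclideanLin_iff.2 hA).restrict_invariant hV
  let e := hS.eigenvectorBasis rfl
  refine ⟨_, fun k => L (e k), hS.eigenvalues rfl, ⟨fun k l => ?_, ?_⟩, fun k => ?_⟩
  · rw [dotProduct_comm]
    exact (orthonormal_iff_ite.1 e.orthonormal k l).trans (by congr)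
  · rw [show (fun k => L (e k)) = (L.toLinearMap ∘ₗ V.subtype) ∘ e from rfl, Set.range_comp,
      Submodule.span_image, ← e.coe_toBasis, e.toBasis.span_eq, Submodule.map_top,
      LinearMap.range_comp, Submodule.range_subtype,
      Submodule.map_comap_eq_of_surjective L.surjective]
  · exact congrArg (fun x : V => L x) (hS.apply_eigenvectorBasis rfl k)

theorem exists_eigenbasis_compression [DecidableEq n] {P Q : Matrix n n 𝕜}
    (hP : IsStarProjection P) (hQ : IsStarProjection Q) :
    ∃ (d : ℕ) (b : Fin d → n → 𝕜) (ν : Fin d → ℝ),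
      IsOrthonormalBasisOf (LinearMap.range Q.mulVecLin) b ∧ (∀ k, ν k ∈ Set.Icc 0 1) ∧
      (∀ k, star (b k) ⬝ᵥ (P *ᵥ b k) = ν k) ∧
      ∀ k, star (b k) ⬝ᵥ ((P * Q * P) *ᵥ b k) = (ν k : 𝕜) ^ 2 := by
  have hQh : Qᴴ = Q := hQ.isSelfAdjoint
  have hQPQ : (Q * P * Q).IsHermitian := by
    simpa [hQh, mul_assoc] using isHermitian_conjTranspose_mul_mul Q hP.isSelfAdjoint
  obtain ⟨d, b, ν, hb, hν⟩ := exists_isOrthonormalBasisOf_mulVec_eq_smul hQPQ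
    (W := LinearMap.range Q.mulVecLin) fun v _ => ⟨(P * Q) *ᵥ v, by simp [mul_assoc]⟩
  have hQb k : Q *ᵥ b k = b k := mulVec_eq_self_of_mem_range hQ.isIdempotentElem (hb.mem k)
  have hQPb k : Q *ᵥ P *ᵥ b k = (ν k : 𝕜) • b k := by
    rw [← hν, ← mulVec_mulVec, ← mulVec_mulVec, hQb]
  have hPb k : star (b k) ⬝ᵥ (P *ᵥ b k) = ν k := by
    calc star (b k) ⬝ᵥ (P *ᵥ b k) = star (Q *ᵥ b k) ⬝ᵥ (P *ᵥ b k) := by rw [hQb]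
      _ = star (b k) ⬝ᵥ (Q *ᵥ P *ᵥ b k) := by rw [star_mulVec, hQh, ← dotProduct_mulVec]
      _ = ν k := by rw [hQPb, dotProduct_smul, hb.orthonormal, if_pos rfl, smul_eq_mul, mul_one]
  refine ⟨d, b, ν, hb, fun k => ?_, hPb, fun k => ?_⟩
  · simpa [hPb, hb.orthonormal] using hP.re_dotProduct_mulVec_mem_Icc (b k)
  · rw [← mulVec_mulVec, ← mulVec_mulVec, hQPb, mulVec_smul, dotProduct_smul, hPb, sq]
    rfl

end OrthonormalBasis

theorem stmt7_general {N Dρ : ℕ}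
    (P Q : Matrix (Fin N) (Fin N) ℂ)
    (hPh : P.IsHermitian) (hPi : P * P = P)
    (hQh : Q.IsHermitian) (hQi : Q * Q = Q)
    (htrQ : Q.trace = (Dρ : ℂ))
    (G₂ σsq : ℝ)
    (hG : G₂ = ((P * Q).trace).re / Dρ)
    (hσ : σsq = ((P * Q * P * Q).trace).re / Dρ - G₂ ^ 2)
    (lam fmax : ℝ) (hlam0 : 0 ≤ lam) (hlam1 : lam < 1)
    (hbasis : ∀ b : Fin Dρ → (Fin N → ℂ),
      (∀ k l, star (b k) ⬝ᵥ b l = if k = l then 1 else 0) →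
      (∀ k, b k ∈ LinearMap.range Q.mulVecLin) →
      Submodule.span ℂ (Set.range b) = LinearMap.range Q.mulVecLin →
      ((Finset.univ.filter
          (fun k => lam < |(star (b k) ⬝ᵥ P.mulVec (b k)).re - G₂|)).card : ℝ) / Dρ
        ≤ fmax) :
    σsq ≤ lam ^ 2 + (1 - lam ^ 2) * fmax := by
  have hQ : IsStarProjection Q := ⟨hQi, hQh⟩
  obtain ⟨d, b, ν, hb, hν01, hPb, hPQPb⟩ := exists_eigenbasis_compression ⟨hPi, hPh⟩ hQ
  obtain rfl : Dρ = d := by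
    have hd := hb.card_eq_trace hQ
    rw [Fintype.card_fin, htrQ] at hd
    exact_mod_cast hd.symm
  have hG' : G₂ = (∑ k, ν k) / Dρ := by
    simp [hG, hb.trace_mul_eq_sum hQ, hPb]
  have hσ' : σsq = (∑ k, ν k ^ 2) / Dρ - G₂ ^ 2 := by
    simp [hσ, hb.trace_mul_eq_sum hQ (P * Q * P), hPQPb, ← Complex.ofReal_pow]
  have hf := hbasis b hb.orthonormal hb.mem hb.span_eq
  simp only [hPb, RCLike.ofReal_eq_complex_ofReal, Complex.ofReal_re] at hf
  have hvar := mean_sq_sub_sq_mean_le ν hν01 hlam0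
  simp only [Fintype.card_fin, ← hG', ← hσ'] at hvar
  refine hvar.trans ?_
  gcongr
  nlinarith

/-- **converse bound.** Let `P`, `Q` be orthogonal projections with `Tr Q = D_ρ`,
`G₂ = (1/D_ρ)Tr[PQ]`, `σ² = (1/D_ρ)Tr[PQPQ] − G₂²`, and `0 ≤ λ < 1`. If for every orthonormal
basis `{b_k}` of `range Q` the fraction of indices with `|⟨b_k, P b_k⟩ − G₂| > λ` is at most
`f^max`, then `σ² ≤ λ² + (1 − λ²)·f^max`. -/
theorem stmt7 {N Dρ : ℕ} (hDρ : 0 < Dρ)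
    (P Q : Matrix (Fin N) (Fin N) ℂ)
    (hPh : P.IsHermitian) (hPi : P * P = P)
    (hQh : Q.IsHermitian) (hQi : Q * Q = Q)
    (htrQ : Q.trace = (Dρ : ℂ))
    (G₂ σsq : ℝ)
    (hG : G₂ = ((P * Q).trace).re / Dρ)
    (hσ : σsq = ((P * Q * P * Q).trace).re / Dρ - G₂ ^ 2)
    (lam fmax : ℝ) (hlam0 : 0 ≤ lam) (hlam1 : lam < 1)
    (hbasis : ∀ b : Fin Dρ → (Fin N → ℂ),
      (∀ k l, star (b k) ⬝ᵥ b l = if k = l then 1 else 0) →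
      (∀ k, b k ∈ LinearMap.range Q.mulVecLin) →
      Submodule.span ℂ (Set.range b) = LinearMap.range Q.mulVecLin →
      ((Finset.univ.filter
          (fun k => lam < |(star (b k) ⬝ᵥ P.mulVec (b k)).re - G₂|)).card : ℝ) / Dρ
        ≤ fmax) :
    σsq ≤ lam ^ 2 + (1 - lam ^ 2) * fmax :=
  stmt7_general P Q hPh hPi hQh hQi htrQ G₂ σsq hG hσ lam fmax hlam0 hlam1 hbasis
end

section
/- Autocorrelator-to-correlator bound: in a finite-dimensional complex inner product space V with a one-parameter unitary group U_t = Σ_k e^{−iE_k t}P_k, let w, w₊ : ℝ → ℝ≥0 be weights with ∫w = ∫w₊ = 1, let ΔE > 0, and suppose |ŵ(E)| ≤ w₀ for all eigenvalues E with |E| ≥ ΔE, ŵ₊(E) ≥ 0 for all eigenvalues E, and ŵ₊(E) > W > 0 for all eigenvalues E with |E| < ΔE. Then for all A, B ∈ V: |∫ w(t)⟨B, U_t A⟩ dt| ≤ (√[(1/W)·∫ w₊(t)⟨A, U_t A⟩ dt] + w₀·√⟨A,A⟩)·√⟨B,B⟩. -/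
/-!
Expanding `U_t` in the spectral projections turns `∫ w(t)⟨B, U_t A⟩ dt` into
`∑ₖ ŵ(Eₖ)⟨Pₖ B, Pₖ A⟩`. Split the sum at `|Eₖ| = ΔE` and apply Cauchy–Schwarz to each part.
At high energies `|ŵ| ≤ w₀` and `∑ ‖Pₖ A‖² ≤ ‖A‖²`. At low energies `|ŵ| ≤ 1`, and the
low-energy weight `∑ ‖Pₖ A‖²` is at most `W⁻¹ ∫ w₊(t)⟨A, U_t A⟩ dt`, because the latter equals
`∑ₖ ŵ₊(Eₖ)‖Pₖ A‖²`, a sum of nonnegative terms each exceeding `W ‖Pₖ A‖²` at low energy.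
-/

open MeasureTheory Finset

open scoped InnerProductSpace

namespace LinearMap.IsSymmetricProjection

variable {𝕜 V : Type*} [RCLike 𝕜] [NormedAddCommGroup V] [InnerProductSpace 𝕜 V]
  {P : V →ₗ[𝕜] V}

theorem inner_apply_eq_inner_apply_apply (hP : P.IsSymmetricProjection) (x y : V) :
    ⟪x, P y⟫_𝕜 = ⟪P x, P y⟫_𝕜 := by
  rw [hP.isSymmetric x (P y), ← Module.End.mul_apply, hP.isIdempotentElem.eq]

theorem inner_self_apply_eq_norm_sq (hP : P.IsSymmetricProjection) (x : V) :
    ⟪x, P x⟫_𝕜 = (‖P x‖ : 𝕜) ^ 2 := by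
  rw [hP.inner_apply_eq_inner_apply_apply, inner_self_eq_norm_sq_to_K]

theorem norm_inner_apply_le (hP : P.IsSymmetricProjection) (x y : V) :
    ‖⟪x, P y⟫_𝕜‖ ≤ ‖P x‖ * ‖P y‖ :=
  hP.inner_apply_eq_inner_apply_apply x y ▸ norm_inner_le_norm _ _

end LinearMap.IsSymmetricProjection

section ResolutionOfIdentity

variable {𝕜 V ι : Type*} [RCLike 𝕜] [NormedAddCommGroup V] [InnerProductSpace 𝕜 V] [Fintype ι]
  {P : ι → V →ₗ[𝕜] V}

theorem sum_norm_sq_apply_eq_norm_sq (hP : ∀ k, (P k).IsSymmetricProjection)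
    (hsum : ∑ k, P k = LinearMap.id) (x : V) : ∑ k, ‖P k x‖ ^ 2 = ‖x‖ ^ 2 := by
  have hx : ∑ k, P k x = x := by simpa using LinearMap.congr_fun hsum x
  have : ∑ k, ((‖P k x‖ : 𝕜)) ^ 2 = (‖x‖ : 𝕜) ^ 2 := by
    simp_rw [← (hP _).inner_self_apply_eq_norm_sq, ← inner_sum, hx, inner_self_eq_norm_sq_to_K]
  exact_mod_cast this

theorem sqrt_sum_norm_sq_apply_le_norm (hP : ∀ k, (P k).IsSymmetricProjection)
    (hsum : ∑ k, P k = LinearMap.id) (s : Finset ι) (x : V) : √(∑ k ∈ s, ‖P k x‖ ^ 2) ≤ ‖x‖ :=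
  (Real.sqrt_le_left (norm_nonneg x)).mpr <|
    (sum_le_univ_sum_of_nonneg fun _ => sq_nonneg _).trans_eq
      (sum_norm_sq_apply_eq_norm_sq hP hsum x)

theorem norm_sum_mul_inner_apply_le (hP : ∀ k, (P k).IsSymmetricProjection)
    (hsum : ∑ k, P k = LinearMap.id) {s : Finset ι} {c : ι → 𝕜} {M : ℝ} (hM₀ : 0 ≤ M)
    (hM : ∀ k ∈ s, ‖c k‖ ≤ M) (x y : V) :
    ‖∑ k ∈ s, c k * ⟪x, P k y⟫_𝕜‖ ≤ M * √(∑ k ∈ s, ‖P k y‖ ^ 2) * ‖x‖ := by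
  calc ‖∑ k ∈ s, c k * ⟪x, P k y⟫_𝕜‖ ≤ ∑ k ∈ s, ‖c k‖ * ‖⟪x, P k y⟫_𝕜‖ := by
        simpa only [norm_mul] using norm_sum_le s fun k => c k * ⟪x, P k y⟫_𝕜
    _ ≤ ∑ k ∈ s, M * (‖P k y‖ * ‖P k x‖) := by
        gcongr with k hk
        · exact hM k hk
        · rw [mul_comm]; exact (hP k).norm_inner_apply_le x y
    _ ≤ M * (√(∑ k ∈ s, ‖P k y‖ ^ 2) * √(∑ k ∈ s, ‖P k x‖ ^ 2)) := by
        rw [← mul_sum]; gcongr; exact Real.sum_mul_le_sqrt_mul_sqrt _ _ _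
    _ ≤ M * (√(∑ k ∈ s, ‖P k y‖ ^ 2) * ‖x‖) := by
        gcongr
        exact sqrt_sum_norm_sq_apply_le_norm hP hsum s x
    _ = M * √(∑ k ∈ s, ‖P k y‖ ^ 2) * ‖x‖ := (mul_assoc _ _ _).symm

end ResolutionOfIdentity
/-- `ŵ(e) = ∫ w(t) e^{-iet} dt`; unlike Mathlib's `𝓕`, no factor `2π` in the exponent. -/
noncomputable def fourierHat (w : ℝ → ℝ) (e : ℝ) : ℂ :=
  ∫ t, (w t : ℂ) * Complex.exp (-Complex.I * e * t)

theorem norm_exp_neg_I_mul_mul (e t : ℝ) : ‖Complex.exp (-Complex.I * e * t)‖ = 1 := by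
  rw [show -Complex.I * e * t = ((-(e * t) : ℝ) : ℂ) * Complex.I by push_cast; ring]
  exact Complex.norm_exp_ofReal_mul_I _

theorem integrable_mul_exp_neg_I_mul_mul {w : ℝ → ℝ} (hw : Integrable w) (e : ℝ) :
    Integrable fun t : ℝ => (w t : ℂ) * Complex.exp (-Complex.I * e * t) :=
  hw.ofReal.mul_bdd (by fun_prop)
    (Filter.Eventually.of_forall fun t => (norm_exp_neg_I_mul_mul e t).le)

theorem norm_fourierHat_le_one {w : ℝ → ℝ} (hw₀ : ∀ t, 0 ≤ w t) (hw₁ : ∫ t, w t = 1) (e : ℝ) :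
    ‖fourierHat w e‖ ≤ 1 :=
  calc ‖fourierHat w e‖ ≤ ∫ t, ‖(w t : ℂ) * Complex.exp (-Complex.I * e * t)‖ :=
        norm_integral_le_integral_norm _
    _ = 1 := by
        simp_rw [norm_mul, norm_exp_neg_I_mul_mul, mul_one, Complex.norm_real,
          Real.norm_of_nonneg (hw₀ _), hw₁]

section SpectralEvolution

variable {V ι : Type*} [NormedAddCommGroup V] [InnerProductSpace ℂ V] [Fintype ι]
  {E : ι → ℝ} {P : ι → V →ₗ[ℂ] V} {U : ℝ → V →ₗ[ℂ] V}

theorem mul_inner_evolution_eq_sum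
    (hU : ∀ t, U t = ∑ k, Complex.exp (-Complex.I * E k * t) • P k)
    (w : ℝ → ℝ) (x y : V) (t : ℝ) :
    (w t : ℂ) * ⟪x, U t y⟫_ℂ =
      ∑ k, ⟪x, P k y⟫_ℂ * ((w t : ℂ) * Complex.exp (-Complex.I * E k * t)) := by
  simp only [hU, LinearMap.sum_apply, LinearMap.smul_apply, inner_sum, inner_smul_right, mul_sum]
  exact sum_congr rfl fun k _ => by ring

theorem integrable_mul_inner_evolution
    (hU : ∀ t, U t = ∑ k, Complex.exp (-Complex.I * E k * t) • P k)
    {w : ℝ → ℝ} (hw : Integrable w) (x y : V) :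
    Integrable fun t => (w t : ℂ) * ⟪x, U t y⟫_ℂ := by
  simp_rw [mul_inner_evolution_eq_sum hU]
  exact integrable_finsetSum _ fun k _ => (integrable_mul_exp_neg_I_mul_mul hw (E k)).const_mul _

theorem integral_mul_inner_evolution_eq_sum
    (hU : ∀ t, U t = ∑ k, Complex.exp (-Complex.I * E k * t) • P k)
    {w : ℝ → ℝ} (hw : Integrable w) (x y : V) :
    ∫ t, (w t : ℂ) * ⟪x, U t y⟫_ℂ = ∑ k, fourierHat w (E k) * ⟪x, P k y⟫_ℂ := by
  simp_rw [mul_inner_evolution_eq_sum hU]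
  rw [integral_finsetSum _ fun k _ => (integrable_mul_exp_neg_I_mul_mul hw (E k)).const_mul _]
  exact sum_congr rfl fun k _ => by rw [integral_const_mul, mul_comm, fourierHat]

theorem integral_mul_re_inner_evolution_self_eq_sum (hP : ∀ k, (P k).IsSymmetricProjection)
    (hU : ∀ t, U t = ∑ k, Complex.exp (-Complex.I * E k * t) • P k)
    {w : ℝ → ℝ} (hw : Integrable w) (x : V) :
    ∫ t, w t * (⟪x, U t x⟫_ℂ).re = ∑ k, (fourierHat w (E k)).re * ‖P k x‖ ^ 2 := by
  have h := integral_re (integrable_mul_inner_evolution hU hw x x)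
  simp only [RCLike.re_to_complex, Complex.re_ofReal_mul] at h
  rw [h, integral_mul_inner_evolution_eq_sum hU hw, Complex.re_sum]
  refine sum_congr rfl fun k _ => ?_
  rw [(hP k).inner_self_apply_eq_norm_sq, ← RCLike.ofReal_pow]
  exact RCLike.re_mul_ofReal (K := ℂ) _ _

theorem mul_sum_norm_sq_apply_le_integral_mul_re_inner_evolution_self
    (hP : ∀ k, (P k).IsSymmetricProjection)
    (hU : ∀ t, U t = ∑ k, Complex.exp (-Complex.I * E k * t) • P k)
    {w : ℝ → ℝ} (hw : Integrable w) (hw_nonneg : ∀ k, 0 ≤ (fourierHat w (E k)).re)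
    {s : Finset ι} {W : ℝ} (hW : ∀ k ∈ s, W ≤ (fourierHat w (E k)).re) (x : V) :
    W * ∑ k ∈ s, ‖P k x‖ ^ 2 ≤ ∫ t, w t * (⟪x, U t x⟫_ℂ).re := by
  rw [integral_mul_re_inner_evolution_self_eq_sum hP hU hw, mul_sum]
  calc ∑ k ∈ s, W * ‖P k x‖ ^ 2 ≤ ∑ k ∈ s, (fourierHat w (E k)).re * ‖P k x‖ ^ 2 := by
        gcongr with k hk; exact hW k hk
    _ ≤ _ := sum_le_univ_sum_of_nonneg fun k => mul_nonneg (hw_nonneg k) (sq_nonneg _)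

end SpectralEvolution

theorem stmt9_general {V : Type*} [NormedAddCommGroup V] [InnerProductSpace ℂ V]
    {m : ℕ} (E : Fin m → ℝ) (Pk : Fin m → (V →ₗ[ℂ] V))
    (hproj : ∀ k, Pk k ∘ₗ Pk k = Pk k)
    (hsa : ∀ k (x y : V), (inner ℂ (Pk k x) y : ℂ) = inner ℂ x (Pk k y))
    (hcomplete : ∑ k, Pk k = LinearMap.id)
    (U : ℝ → (V →ₗ[ℂ] V))
    (hU : ∀ t, U t = ∑ k, Complex.exp (-Complex.I * (E k) * t) • Pk k)
    (w wplus : ℝ → ℝ)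
    (hw0 : ∀ t, 0 ≤ w t) (hwInt : Integrable w) (hw1 : ∫ t, w t = 1)
    (hwpInt : Integrable wplus)
    (ΔE w₀ W : ℝ) (hw₀ : 0 ≤ w₀) (hW : 0 < W)
    (hhatw : ∀ k, ΔE ≤ |E k| →
      ‖∫ t, (w t : ℂ) * Complex.exp (-Complex.I * (E k) * t)‖ ≤ w₀)
    (hhatwp_nonneg : ∀ k,
      0 ≤ (∫ t, (wplus t : ℂ) * Complex.exp (-Complex.I * (E k) * t)).re ∧
      (∫ t, (wplus t : ℂ) * Complex.exp (-Complex.I * (E k) * t)).im = 0)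
    (hhatwp_W : ∀ k, |E k| < ΔE →
      W < (∫ t, (wplus t : ℂ) * Complex.exp (-Complex.I * (E k) * t)).re)
    (A B : V) :
    ‖∫ t, (w t : ℂ) * (inner ℂ B (U t A) : ℂ)‖
      ≤ (Real.sqrt ((1 / W) * ∫ t, wplus t * ((inner ℂ A (U t A) : ℂ)).re)
          + w₀ * Real.sqrt ((inner ℂ A A : ℂ).re))
        * Real.sqrt ((inner ℂ B B : ℂ).re) := by
  classical
  have hP : ∀ k, (Pk k).IsSymmetricProjection := fun k => ⟨hproj k, hsa k⟩
  set S := univ.filter fun k => |E k| < ΔE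
  have hlow : ∑ k ∈ S, ‖Pk k A‖ ^ 2 ≤ 1 / W * ∫ t, wplus t * (⟪A, U t A⟫_ℂ).re := by
    rw [one_div, le_inv_mul_iff₀ hW]
    exact mul_sum_norm_sq_apply_le_integral_mul_re_inner_evolution_self hP hU hwpInt
      (fun k => (hhatwp_nonneg k).1) (fun k hk => (hhatwp_W k (mem_filter.1 hk).2).le) A
  have hlowPart := norm_sum_mul_inner_apply_le hP hcomplete zero_le_one
    (fun k _ => norm_fourierHat_le_one hw0 hw1 (E k)) B A (s := S)
  have hhighPart := norm_sum_mul_inner_apply_le hP hcomplete hw₀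
    (fun k hk => hhatw k (by simpa [S] using hk)) B A (s := Sᶜ)
  rw [← show ‖A‖ = √((⟪A, A⟫_ℂ).re) from norm_eq_sqrt_re_inner (𝕜 := ℂ) A,
    ← show ‖B‖ = √((⟪B, B⟫_ℂ).re) from norm_eq_sqrt_re_inner (𝕜 := ℂ) B,
    integral_mul_inner_evolution_eq_sum hU hwInt, ← sum_add_sum_compl S]
  calc _ ≤ _ := norm_add_le _ _
    _ ≤ 1 * √(1 / W * ∫ t, wplus t * (⟪A, U t A⟫_ℂ).re) * ‖B‖ + w₀ * ‖A‖ * ‖B‖ := by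
        gcongr
        · exact hlowPart.trans (by gcongr)
        · exact hhighPart.trans (by gcongr; exact sqrt_sum_norm_sq_apply_le_norm hP hcomplete _ A)
    _ = _ := by ring

/-- **autocorrelator-to-correlator bound.** In a finite-dimensional complex inner
product space with a one-parameter unitary group `U_t = Σ_k e^{−iE_k t} P_k`, given weights
`w, w₊ ≥ 0` with `∫w = ∫w₊ = 1`, `ΔE > 0`, and constants `w₀ ≥ 0`, `W > 0` such that
`|ŵ(E_k)| ≤ w₀` for `|E_k| ≥ ΔE`, `ŵ₊(E_k) ≥ 0` for all `k`, and `ŵ₊(E_k) > W` for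
`|E_k| < ΔE`, then for all `A, B`:
`|∫ w(t)⟨B, U_t A⟩dt| ≤ (√[(1/W)∫ w₊(t)⟨A, U_t A⟩dt] + w₀·√⟨A,A⟩)·√⟨B,B⟩`. -/
theorem stmt9 {V : Type*} [NormedAddCommGroup V] [InnerProductSpace ℂ V]
    [FiniteDimensional ℂ V]
    {m : ℕ} (E : Fin m → ℝ) (Pk : Fin m → (V →ₗ[ℂ] V))
    (hproj : ∀ k, Pk k ∘ₗ Pk k = Pk k)
    (horth : ∀ j k, j ≠ k → Pk j ∘ₗ Pk k = 0)
    (hsa : ∀ k (x y : V), (inner ℂ (Pk k x) y : ℂ) = inner ℂ x (Pk k y))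
    (hcomplete : ∑ k, Pk k = LinearMap.id)
    (U : ℝ → (V →ₗ[ℂ] V))
    (hU : ∀ t, U t = ∑ k, Complex.exp (-Complex.I * (E k) * t) • Pk k)
    (w wplus : ℝ → ℝ)
    (hw0 : ∀ t, 0 ≤ w t) (hwInt : Integrable w) (hw1 : ∫ t, w t = 1)
    (hwp0 : ∀ t, 0 ≤ wplus t) (hwpInt : Integrable wplus) (hwp1 : ∫ t, wplus t = 1)
    (ΔE w₀ W : ℝ) (hΔE : 0 < ΔE) (hw₀ : 0 ≤ w₀) (hW : 0 < W)
    (hhatw : ∀ k, ΔE ≤ |E k| →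
      ‖∫ t, (w t : ℂ) * Complex.exp (-Complex.I * (E k) * t)‖ ≤ w₀)
    (hhatwp_nonneg : ∀ k,
      0 ≤ (∫ t, (wplus t : ℂ) * Complex.exp (-Complex.I * (E k) * t)).re ∧
      (∫ t, (wplus t : ℂ) * Complex.exp (-Complex.I * (E k) * t)).im = 0)
    (hhatwp_W : ∀ k, |E k| < ΔE →
      W < (∫ t, (wplus t : ℂ) * Complex.exp (-Complex.I * (E k) * t)).re)
    (A B : V) :
    ‖∫ t, (w t : ℂ) * (inner ℂ B (U t A) : ℂ)‖
      ≤ (Real.sqrt ((1 / W) * ∫ t, wplus t * ((inner ℂ A (U t A) : ℂ)).re)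
          + w₀ * Real.sqrt ((inner ℂ A A : ℂ).re))
        * Real.sqrt ((inner ℂ B B : ℂ).re) :=
  stmt9_general E Pk hproj hsa hcomplete U hU w wplus hw0 hwInt hw1 hwpInt ΔE w₀ W hw₀ hW hhatw
    hhatwp_nonneg hhatwp_W A B
end

section
/- Lipschitz continuity of the OTOC on the unitary group: for fixed orthogonal projections P₁, Q₁ on ℂ^D with Tr Q₁ = D_ρ ≥ 1, the function F(U) = (1/D_ρ)·Tr[P₁UQ₁U†P₁UQ₁U†] satisfies |F(U) − F(V)| ≤ (4/√D_ρ)·‖U − V‖_HS for all unitaries U, V. -/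
open Matrix Complex

/-- The Hilbert–Schmidt (Frobenius) norm `‖X‖_HS = √Tr(X†X)`. -/
noncomputable def hsNorm {D : ℕ} (X : Matrix (Fin D) (Fin D) ℂ) : ℝ :=
  Real.sqrt (((Xᴴ * X).trace).re)

/-!
Telescoping `F(U) - F(V)` gives four traces, each containing a single factor `U - V` or
`(U - V)ᴴ`. By cyclicity each is the trace of that factor times `Q₁ K` or `K Q₁`, where `K` is a
product of unitaries and projections, hence a contraction. Cauchy–Schwarz for the
Hilbert–Schmidt inner product bounds it by `‖U - V‖_HS ‖Q₁‖_HS = ‖U - V‖_HS √D_ρ`.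
-/

section HilbertSchmidt

variable {D : ℕ}

theorem hsNorm_conjTranspose (X : Matrix (Fin D) (Fin D) ℂ) : hsNorm Xᴴ = hsNorm X := by
  rw [hsNorm, hsNorm, conjTranspose_conjTranspose, trace_mul_comm]

open scoped ComplexOrder in
theorem re_trace_conjTranspose_mul_self_nonneg (X : Matrix (Fin D) (Fin D) ℂ) :
    0 ≤ ((Xᴴ * X).trace).re :=
  (RCLike.nonneg_iff.mp (posSemidef_conjTranspose_mul_self X).trace_nonneg).1

open scoped ComplexOrder in
theorem norm_trace_mul_le (X Y : Matrix (Fin D) (Fin D) ℂ) :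
    ‖(X * Y).trace‖ ≤ hsNorm X * hsNorm Y := by
  -- the inner product `⟪A, B⟫ = Tr (B Aᴴ)` induced by the identity matrix
  let _ := toMatrixSeminormedAddCommGroup (1 : Matrix (Fin D) (Fin D) ℂ) PosSemidef.one
  let _ := toMatrixInnerProductSpace (1 : Matrix (Fin D) (Fin D) ℂ) PosSemidef.one
  have hnorm (Z : Matrix (Fin D) (Fin D) ℂ) : ‖Z‖ = hsNorm Z := by
    rw [norm_eq_sqrt_re_inner (𝕜 := ℂ), ← hsNorm_conjTranspose, hsNorm,
      conjTranspose_conjTranspose]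
    show √((Z * 1 * Zᴴ).trace.re) = _
    rw [mul_one]
  have hinner : (X * Y).trace = inner ℂ Yᴴ X := by
    show _ = (X * 1 * Yᴴᴴ).trace
    rw [mul_one, conjTranspose_conjTranspose]
  rw [hinner, mul_comm, ← hsNorm_conjTranspose Y, ← hnorm, ← hnorm]
  exact norm_inner_le_norm _ _

theorem hsNorm_mul_unitary (X : Matrix (Fin D) (Fin D) ℂ) {W : Matrix (Fin D) (Fin D) ℂ}
    (hW : W ∈ unitaryGroup (Fin D) ℂ) : hsNorm (X * W) = hsNorm X := by
  rw [hsNorm, hsNorm, conjTranspose_mul, mul_assoc, trace_mul_comm, mul_assoc, mul_assoc,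
    ← star_eq_conjTranspose W, Unitary.mul_star_self_of_mem hW, mul_one]

theorem trace_conjTranspose_mul_self_mul_isStarProjection (X : Matrix (Fin D) (Fin D) ℂ)
    {P : Matrix (Fin D) (Fin D) ℂ} (hP : IsStarProjection P) :
    ((X * P)ᴴ * (X * P)).trace = (Xᴴ * X * P).trace := by
  rw [conjTranspose_mul, ← star_eq_conjTranspose P, hP.isSelfAdjoint.star_eq, ← mul_assoc,
    trace_mul_comm, ← mul_assoc, ← mul_assoc, hP.isIdempotentElem.eq, mul_assoc, trace_mul_comm]

theorem hsNorm_mul_le_of_isStarProjection (X : Matrix (Fin D) (Fin D) ℂ)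
    {P : Matrix (Fin D) (Fin D) ℂ} (hP : IsStarProjection P) : hsNorm (X * P) ≤ hsNorm X := by
  have hsplit : ((Xᴴ * X).trace).re
      = (((X * P)ᴴ * (X * P)).trace).re + (((X * (1 - P))ᴴ * (X * (1 - P))).trace).re := by
    rw [trace_conjTranspose_mul_self_mul_isStarProjection X hP,
      trace_conjTranspose_mul_self_mul_isStarProjection X hP.one_sub, ← add_re, ← trace_add,
      ← mul_add, add_sub_cancel, mul_one]
  refine Real.sqrt_le_sqrt ?_
  linarith [re_trace_conjTranspose_mul_self_nonneg (X * (1 - P))]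

theorem hsNorm_of_isStarProjection {P : Matrix (Fin D) (Fin D) ℂ} (hP : IsStarProjection P) :
    hsNorm P = √(P.trace.re) := by
  rw [hsNorm, ← star_eq_conjTranspose, hP.isSelfAdjoint.star_eq, hP.isIdempotentElem.eq]

end HilbertSchmidt

/-- Equivalently, the matrices of operator norm at most `1`. -/
def hsContractions (D : ℕ) : Submonoid (Matrix (Fin D) (Fin D) ℂ) where
  carrier := {M | ∀ X, hsNorm (X * M) ≤ hsNorm X}
  one_mem' X := by rw [mul_one]
  mul_mem' {M N} hM hN X := by
    rw [← mul_assoc]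
    exact (hN _).trans (hM X)

section Contractions

variable {D : ℕ}

theorem unitary_mem_hsContractions {W : Matrix (Fin D) (Fin D) ℂ}
    (hW : W ∈ unitaryGroup (Fin D) ℂ) : W ∈ hsContractions D :=
  fun X => (hsNorm_mul_unitary X hW).le

theorem IsStarProjection.mem_hsContractions {P : Matrix (Fin D) (Fin D) ℂ}
    (hP : IsStarProjection P) : P ∈ hsContractions D :=
  fun X => hsNorm_mul_le_of_isStarProjection X hP

theorem norm_trace_mul_mul_mul_le_of_mem_hsContractions {L R : Matrix (Fin D) (Fin D) ℂ}
    (hL : L ∈ hsContractions D) (hR : R ∈ hsContractions D) (A B : Matrix (Fin D) (Fin D) ℂ) :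
    ‖(L * A * B * R).trace‖ ≤ hsNorm A * hsNorm B := by
  have hcycle : (L * A * B * R).trace = (A * (B * (R * L))).trace := by
    simp only [mul_assoc]
    rw [trace_mul_comm L]
    simp only [mul_assoc]
  rw [hcycle]
  calc _ ≤ hsNorm A * hsNorm (B * (R * L)) := norm_trace_mul_le _ _
    _ ≤ hsNorm A * hsNorm B := by
      gcongr
      · exact Real.sqrt_nonneg _
      · exact (hsContractions D).mul_mem hR hL B

theorem norm_trace_otoc_sub_le {P Q U V : Matrix (Fin D) (Fin D) ℂ}
    (hP : IsStarProjection P) (hQ : IsStarProjection Q)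
    (hU : U ∈ unitaryGroup (Fin D) ℂ) (hV : V ∈ unitaryGroup (Fin D) ℂ) :
    ‖(P * U * Q * Uᴴ * P * U * Q * Uᴴ).trace - (P * V * Q * Vᴴ * P * V * Q * Vᴴ).trace‖
      ≤ 4 * (hsNorm (U - V) * hsNorm Q) := by
  have hP' := hP.mem_hsContractions
  have hQ' := hQ.mem_hsContractions
  have hU' := unitary_mem_hsContractions hU
  have hV' := unitary_mem_hsContractions hV
  have hUc := unitary_mem_hsContractions (Unitary.star_mem hU)
  have hVc := unitary_mem_hsContractions (Unitary.star_mem hV)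
  rw [star_eq_conjTranspose] at hUc hVc
  have htele :
      (P * U * Q * Uᴴ * P * U * Q * Uᴴ).trace - (P * V * Q * Vᴴ * P * V * Q * Vᴴ).trace
      = (P * (U - V) * Q * (Uᴴ * P * U * Q * Uᴴ)).trace
        + (P * V * Q * (U - V)ᴴ * (P * U * Q * Uᴴ)).trace
        + (P * V * Q * Vᴴ * P * (U - V) * Q * Uᴴ).trace
        + (P * V * Q * Vᴴ * P * V * Q * (U - V)ᴴ * 1).trace := by
    simp only [← trace_sub, ← trace_add, conjTranspose_sub]
    congr 1
    noncomm_ring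
  have h₁ := norm_trace_mul_mul_mul_le_of_mem_hsContractions hP'
    (mul_mem (mul_mem (mul_mem (mul_mem hUc hP') hU') hQ') hUc) (U - V) Q
  have h₂ := norm_trace_mul_mul_mul_le_of_mem_hsContractions (mul_mem hP' hV')
    (mul_mem (mul_mem (mul_mem hP' hU') hQ') hUc) Q (U - V)ᴴ
  have h₃ := norm_trace_mul_mul_mul_le_of_mem_hsContractions
    (mul_mem (mul_mem (mul_mem (mul_mem hP' hV') hQ') hVc) hP') hUc (U - V) Q
  have h₄ := norm_trace_mul_mul_mul_le_of_mem_hsContractions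
    (mul_mem (mul_mem (mul_mem (mul_mem (mul_mem hP' hV') hQ') hVc) hP') hV')
    (one_mem _) Q (U - V)ᴴ
  rw [hsNorm_conjTranspose] at h₂ h₄
  rw [htele]
  refine norm_add₄_le.trans ?_
  linarith

end Contractions

theorem stmt15_general {D Dρ : ℕ}
    (P₁ Q₁ : Matrix (Fin D) (Fin D) ℂ)
    (hPh : P₁.IsHermitian) (hPi : P₁ * P₁ = P₁)
    (hQh : Q₁.IsHermitian) (hQi : Q₁ * Q₁ = Q₁)
    (htrQ : Q₁.trace = (Dρ : ℂ))
    (U V : Matrix (Fin D) (Fin D) ℂ)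
    (hU : U ∈ Matrix.unitaryGroup (Fin D) ℂ)
    (hV : V ∈ Matrix.unitaryGroup (Fin D) ℂ) :
    |((P₁ * U * Q₁ * Uᴴ * P₁ * U * Q₁ * Uᴴ).trace).re / Dρ
        - ((P₁ * V * Q₁ * Vᴴ * P₁ * V * Q₁ * Vᴴ).trace).re / Dρ|
      ≤ (4 / Real.sqrt Dρ) * hsNorm (U - V) := by
  have hQ : IsStarProjection Q₁ := ⟨hQi, hQh⟩
  have hQnorm : hsNorm Q₁ = √Dρ := by
    rw [hsNorm_of_isStarProjection hQ, htrQ, natCast_re]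
  have hdiff := norm_trace_otoc_sub_le ⟨hPi, hPh⟩ hQ hU hV
  rw [hQnorm] at hdiff
  rw [div_sub_div_same, ← sub_re, abs_div, Nat.abs_cast]
  calc _ ≤ 4 * (hsNorm (U - V) * √Dρ) / Dρ := by
        gcongr
        exact (abs_re_le_norm _).trans hdiff
    _ = 4 / √Dρ * hsNorm (U - V) := by
        rw [mul_comm (hsNorm _), ← mul_assoc, mul_div_right_comm, mul_div_assoc,
          Real.sqrt_div_self']
        ring

/-- **Lipschitz continuity of the OTOC.** For fixed orthogonal projections
`P₁`, `Q₁` on `ℂ^D` with `Tr Q₁ = D_ρ ≥ 1`, the function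
`F(U) = (1/D_ρ)·Tr[P₁UQ₁U†P₁UQ₁U†]` satisfies `|F(U) − F(V)| ≤ (4/√D_ρ)·‖U − V‖_HS` for all
unitaries `U`, `V`. -/
theorem stmt15 {D Dρ : ℕ} (hDρ : 1 ≤ Dρ)
    (P₁ Q₁ : Matrix (Fin D) (Fin D) ℂ)
    (hPh : P₁.IsHermitian) (hPi : P₁ * P₁ = P₁)
    (hQh : Q₁.IsHermitian) (hQi : Q₁ * Q₁ = Q₁)
    (htrQ : Q₁.trace = (Dρ : ℂ))
    (U V : Matrix (Fin D) (Fin D) ℂ)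
    (hU : U ∈ Matrix.unitaryGroup (Fin D) ℂ)
    (hV : V ∈ Matrix.unitaryGroup (Fin D) ℂ) :
    |((P₁ * U * Q₁ * Uᴴ * P₁ * U * Q₁ * Uᴴ).trace).re / Dρ
        - ((P₁ * V * Q₁ * Vᴴ * P₁ * V * Q₁ * Vᴴ).trace).re / Dρ|
      ≤ (4 / Real.sqrt Dρ) * hsNorm (U - V) :=
  stmt15_general P₁ Q₁ hPh hPi hQh hQi htrQ U V hU hV
end
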